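/- Let C be a coalgebra over a field k. If the convolution algebra C* is left self-injective (i.e. C* is injective as a left module over itself), then the Nakayama functor N_C is exact. -/

import Mathlib

/-!
Statement 2.  Let `C` be a coalgebra over a field `k`.  If the convolution algebra
`C* = Module.Dual k C` is left self-injective (i.e. `C*` is injective as a left module
over itself), then the Nakayama functor `N_C` is exact.

Concrete realisations (over the coalgebra `(C, Δ, ε)`):
* right `C`-comodules, the left `C*`-action `f ⇀ m = m₍₀₎ ⟨f, m₍₁₎⟩` on them, comodule
  morphisms, and the Nakayama functor `N_C M = C ⊗_{C*} M` are as in the paper;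
* `N_C` is exact iff it preserves short exact sequences of comodules;
* left `C*`-modules are vector spaces with a unital associative action of the
  convolution algebra `C*` (the unit of `C*` is the counit `ε`);
* left self-injectivity of `C*` is the extension property of `C*`-linear maps into the
  left regular module `C*` along injective `C*`-linear maps.
-/

open TensorProduct

universe u

namespace Stmt2

variable {k : Type u} [Field k]

section Framework

variable {C : Type u} [AddCommGroup C] [Module k C]

/-- A right comodule structure over the coalgebra `(C, Δ, ε)`. -/
structure ComodStr (Δ : C →ₗ[k] C ⊗[k] C) (ε : C →ₗ[k] k)
    (M : Type u) [AddCommGroup M] [Module k M] where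
  ρ : M →ₗ[k] M ⊗[k] C
  coassoc : (TensorProduct.assoc k M C C).toLinearMap ∘ₗ
      (TensorProduct.map ρ LinearMap.id) ∘ₗ ρ = (TensorProduct.map LinearMap.id Δ) ∘ₗ ρ
  counit : (TensorProduct.rid k M).toLinearMap ∘ₗ
      (TensorProduct.map LinearMap.id ε) ∘ₗ ρ = LinearMap.id

variable (Δ : C →ₗ[k] C ⊗[k] C) (ε : C →ₗ[k] k)

/-- The convolution product on `C* = (C →ₗ[k] k)`. -/
noncomputable def conv (f g : (C →ₗ[k] k)) : (C →ₗ[k] k) :=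
  (TensorProduct.lid k k).toLinearMap ∘ₗ (TensorProduct.map f g) ∘ₗ Δ


theorem conv_add_right (f g₁ g₂ : (C →ₗ[k] k)) :
    conv Δ f (g₁ + g₂) = conv Δ f g₁ + conv Δ f g₂ := by
  simp [conv, TensorProduct.map_add_right, LinearMap.comp_add, LinearMap.add_comp]

theorem conv_smul_right (a : k) (f g : (C →ₗ[k] k)) :
    conv Δ f (a • g) = a • conv Δ f g := by
  simp [conv, TensorProduct.map_smul_right, LinearMap.comp_smul, LinearMap.smul_comp]

theorem conv_zero_right (f : (C →ₗ[k] k)) : conv Δ f 0 = 0 := by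
  have : TensorProduct.map f (0 : (C →ₗ[k] k)) = 0 := by ext x y; simp
  simp [conv, this]

/-- The left action of `C*` on a right `C`-comodule: `f ⇀ m = m₍₀₎ ⟨f, m₍₁₎⟩`. -/
noncomputable def lAct {M : Type u} [AddCommGroup M] [Module k M]
    {ε : C →ₗ[k] k} (s : ComodStr Δ ε M) (f : (C →ₗ[k] k)) : M →ₗ[k] M :=
  (TensorProduct.rid k M).toLinearMap ∘ₗ (TensorProduct.map LinearMap.id f) ∘ₗ s.ρ

/-- The right action of `C*` on `C` itself: `c ↼ f = ⟨f, c₍₁₎⟩ c₍₂₎`. -/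
noncomputable def rAct (f : (C →ₗ[k] k)) : C →ₗ[k] C :=
  (TensorProduct.lid k C).toLinearMap ∘ₗ (TensorProduct.map f LinearMap.id) ∘ₗ Δ

/-- Morphisms of right `C`-comodules. -/
def IsComodHom {M N : Type u} [AddCommGroup M] [Module k M] [AddCommGroup N] [Module k N]
    (s : ComodStr Δ ε M) (t : ComodStr Δ ε N) (φ : M →ₗ[k] N) : Prop :=
  (TensorProduct.map φ LinearMap.id) ∘ₗ s.ρ = t.ρ ∘ₗ φ

variable {M : Type u} [AddCommGroup M] [Module k M]

/-- The balancing relations defining `C ⊗_{C*} M` inside `C ⊗[k] M`. -/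
noncomputable def relators (s : ComodStr Δ ε M) : Submodule k (C ⊗[k] M) :=
  Submodule.span k {x | ∃ (f : (C →ₗ[k] k)) (c : C) (m : M),
    x = (rAct Δ f c) ⊗ₜ[k] m - c ⊗ₜ[k] (lAct Δ s f m)}

/-- The Nakayama functor on objects: `N_C M = C ⊗_{C*} M`. -/
noncomputable def Nak (s : ComodStr Δ ε M) : Type u :=
  (C ⊗[k] M) ⧸ relators Δ ε s

noncomputable instance (s : ComodStr Δ ε M) : AddCommGroup (Nak Δ ε s) :=
  inferInstanceAs (AddCommGroup ((C ⊗[k] M) ⧸ relators Δ ε s))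

noncomputable instance (s : ComodStr Δ ε M) : Module k (Nak Δ ε s) :=
  inferInstanceAs (Module k ((C ⊗[k] M) ⧸ relators Δ ε s))

/-- A comodule morphism is `C*`-equivariant. -/
theorem equivariant_of_isComodHom
    {N : Type u} [AddCommGroup N] [Module k N]
    {s : ComodStr Δ ε M} {t : ComodStr Δ ε N} {φ : M →ₗ[k] N}
    (hφ : IsComodHom Δ ε s t φ) (f : (C →ₗ[k] k)) (m : M) :
    φ (lAct Δ s f m) = lAct Δ t f (φ m) := by
  have h1 : ((TensorProduct.rid k N).toLinearMap ∘ₗ (TensorProduct.map LinearMap.id f)) ∘ₗ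
      (TensorProduct.map φ (LinearMap.id (M := C))) =
      φ ∘ₗ ((TensorProduct.rid k M).toLinearMap ∘ₗ (TensorProduct.map LinearMap.id f)) := by
    apply TensorProduct.ext'
    intro x c
    simp
  have h2 := congrArg (fun (g : M →ₗ[k] N ⊗[k] C) =>
      ((TensorProduct.rid k N).toLinearMap ∘ₗ (TensorProduct.map LinearMap.id f)) ∘ₗ g) hφ
  simp only [← LinearMap.comp_assoc] at h2
  rw [h1] at h2
  have := congrArg (fun g : M →ₗ[k] N => g m) h2
  simpa [lAct, LinearMap.comp_assoc] using this

/-- The map induced by a comodule morphism on Nakayama functors. -/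
noncomputable def nakMap {N : Type u} [AddCommGroup N] [Module k N]
    {s : ComodStr Δ ε M} {t : ComodStr Δ ε N} (φ : M →ₗ[k] N)
    (hφ : IsComodHom Δ ε s t φ) : Nak Δ ε s →ₗ[k] Nak Δ ε t :=
  Submodule.mapQ (relators Δ ε s) (relators Δ ε t)
    (TensorProduct.map LinearMap.id φ)
    (by
      rw [relators, Submodule.span_le]
      rintro x ⟨f, c, m, rfl⟩
      have : (TensorProduct.map (LinearMap.id (M := C)) φ)
          ((rAct Δ f c) ⊗ₜ[k] m - c ⊗ₜ[k] (lAct Δ s f m)) =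
          (rAct Δ f c) ⊗ₜ[k] (φ m) - c ⊗ₜ[k] (lAct Δ t f (φ m)) := by
        simp [map_sub, equivariant_of_isComodHom Δ ε hφ f m]
      simp only [SetLike.mem_coe, Submodule.mem_comap, this]
      exact Submodule.subset_span ⟨f, c, φ m, rfl⟩)

/-- Rational elements of `C*` (for the left regular `C*`-module structure). -/
def IsRational (f : (C →ₗ[k] k)) : Prop :=
  ∃ (n : ℕ) (g : Fin n → (C →ₗ[k] k)) (c : Fin n → C),
    ∀ h : (C →ₗ[k] k), conv Δ h f = ∑ i, h (c i) • g i


/-- `Hom^C(M, C*_ℓ^rat)`: comodule maps from `M` to the rational part of `C*`,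
realised as left `C*`-module maps `M → C*` with rational image. -/
noncomputable def RatHom {M : Type u} [AddCommGroup M] [Module k M]
    (s : ComodStr Δ ε M) : Submodule k (M →ₗ[k] (C →ₗ[k] k)) where
  carrier := {φ | (∀ (f : (C →ₗ[k] k)) (m : M), φ (lAct Δ s f m) = conv Δ f (φ m)) ∧
      ∀ m : M, IsRational Δ (φ m)}
  add_mem' := by
    rintro φ ψ ⟨hφ, hφr⟩ ⟨hψ, hψr⟩
    refine ⟨fun f m => by simp only [LinearMap.add_apply, hφ f m, hψ f m, conv_add_right],
      fun m => ?_⟩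
    obtain ⟨n₁, g₁, c₁, h₁⟩ := hφr m
    obtain ⟨n₂, g₂, c₂, h₂⟩ := hψr m
    refine ⟨n₁ + n₂, Fin.append g₁ g₂, Fin.append c₁ c₂, fun h => ?_⟩
    rw [LinearMap.add_apply, conv_add_right, h₁ h, h₂ h, Fin.sum_univ_add]
    simp [Fin.append_left, Fin.append_right]
  zero_mem' := by
    refine ⟨fun f m => by simp [conv_zero_right], fun m => ?_⟩
    exact ⟨0, ![], ![], fun h => by simp [conv_zero_right]⟩
  smul_mem' := by
    rintro a φ ⟨hφ, hφr⟩
    refine ⟨fun f m => by simp only [LinearMap.smul_apply, hφ f m, conv_smul_right], fun m => ?_⟩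
    obtain ⟨n, g, c, hg⟩ := hφr m
    refine ⟨n, fun i => a • g i, c, fun h' => ?_⟩
    rw [LinearMap.smul_apply, conv_smul_right, hg h', Finset.smul_sum]
    refine Finset.sum_congr rfl fun i _ => ?_
    rw [smul_comm]

/-- `N_C` is the zero functor. -/
def NakayamaZero : Prop :=
  ∀ (M : Type u) [AddCommGroup M] [Module k M] (s : ComodStr Δ ε M)
    (x : Nak Δ ε s), x = 0

/-- `N_C` is an exact functor: it preserves short exact sequences of comodules. -/
def NakayamaExact : Prop :=
  ∀ (M₁ M₂ M₃ : Type u) [AddCommGroup M₁] [Module k M₁] [AddCommGroup M₂] [Module k M₂]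
    [AddCommGroup M₃] [Module k M₃]
    (s₁ : ComodStr Δ ε M₁) (s₂ : ComodStr Δ ε M₂) (s₃ : ComodStr Δ ε M₃)
    (φ : M₁ →ₗ[k] M₂) (ψ : M₂ →ₗ[k] M₃)
    (hφ : IsComodHom Δ ε s₁ s₂ φ) (hψ : IsComodHom Δ ε s₂ s₃ ψ),
    Function.Injective φ → Function.Surjective ψ → Function.Exact φ ψ →
      Function.Injective (nakMap Δ ε φ hφ) ∧ Function.Surjective (nakMap Δ ε ψ hψ) ∧
        Function.Exact (nakMap Δ ε φ hφ) (nakMap Δ ε ψ hψ)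


/-- A left module structure over the convolution algebra `C*`. -/
structure CstarMod (Δ : C →ₗ[k] C ⊗[k] C) (ε : C →ₗ[k] k)
    (M : Type u) [AddCommGroup M] [Module k M] where
  act : (C →ₗ[k] k) → M →ₗ[k] M
  act_add : ∀ f g : (C →ₗ[k] k), act (f + g) = act f + act g
  act_smul : ∀ (a : k) (f : (C →ₗ[k] k)), act (a • f) = a • act f
  act_one : act ε = LinearMap.id
  act_mul : ∀ f g : (C →ₗ[k] k), act (conv Δ f g) = act f ∘ₗ act g

/-- The convolution algebra `C*` is left self-injective: for every injective morphism
`i : M → N` of left `C*`-modules, every `C*`-linear map `M → C*` (with `C*` the left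
regular module, i.e. acting on itself by convolution) extends along `i`. -/
def CstarLeftSelfInjective (Δ : C →ₗ[k] C ⊗[k] C) (ε : C →ₗ[k] k) : Prop :=
  ∀ (M N : Type u) [AddCommGroup M] [Module k M] [AddCommGroup N] [Module k N]
    (sM : CstarMod Δ ε M) (sN : CstarMod Δ ε N) (i : M →ₗ[k] N),
    (∀ (f : (C →ₗ[k] k)) (m : M), i (sM.act f m) = sN.act f (i m)) →
    Function.Injective i →
    ∀ α : M →ₗ[k] (C →ₗ[k] k),
      (∀ (f : (C →ₗ[k] k)) (m : M), α (sM.act f m) = conv Δ f (α m)) →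
      ∃ β : N →ₗ[k] (C →ₗ[k] k),
        (∀ (f : (C →ₗ[k] k)) (n : N), β (sN.act f n) = conv Δ f (β n)) ∧ β ∘ₗ i = α

end Framework

/-!
`N_C M = C ⊗_{C*} M` is the quotient of `C ⊗ M` by the balancing relations, so it is right
exact like `C ⊗ -`: the relations of a quotient comodule lift to relations of the comodule.
Injectivity of `N_C φ` for an injective comodule map `φ : M₁ → M₂` is where self-injectivity
enters. A `k`-linear functional on `C ⊗_{C*} M` is the same as a `C*`-linear map `M → C*`
(tensor-hom adjunction); such maps extend along `φ` when `C*` is self-injective, so every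
functional on `N_C M₁` factors through `N_C φ`, and functionals separate points.
-/

section QuotientMaps

variable {R M N P : Type*} [Ring R] [AddCommGroup M] [Module R M] [AddCommGroup N] [Module R N]
  [AddCommGroup P] [Module R P] {p : Submodule R M} {q : Submodule R N} {r : Submodule R P}

theorem _root_.Submodule.mapQ_injective_of_comap_le {f : M →ₗ[R] N} (hf : p ≤ q.comap f)
    (hq : q.comap f ≤ p) : Function.Injective (p.mapQ q f hf) := by
  rw [← LinearMap.ker_eq_bot, Submodule.ker_mapQ, eq_bot_iff]
  exact (Submodule.map_mono hq).trans (Submodule.mkQ_map_self p).le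

theorem _root_.Submodule.mapQ_surjective_of_surjective {g : N →ₗ[R] P} (hg : q ≤ r.comap g)
    (hsurj : Function.Surjective g) : Function.Surjective (q.mapQ r g hg) := by
  rintro ⟨z⟩
  obtain ⟨y, rfl⟩ := hsurj z
  exact ⟨Submodule.Quotient.mk y, rfl⟩

theorem _root_.Submodule.exact_mapQ {f : M →ₗ[R] N} {g : N →ₗ[R] P} (hfg : Function.Exact f g)
    (hf : p ≤ q.comap f) (hg : q ≤ r.comap g) (hr : r ≤ q.map g) :
    Function.Exact (p.mapQ q f hf) (q.mapQ r g hg) := by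
  intro y
  constructor
  · obtain ⟨y, rfl⟩ := Submodule.Quotient.mk_surjective q y
    intro hy
    obtain ⟨y', hy'q, hgy'⟩ := hr ((Submodule.Quotient.mk_eq_zero r).mp hy)
    obtain ⟨x, hx⟩ := (hfg (y - y')).mp (by rw [map_sub, hgy', sub_self])
    refine ⟨Submodule.Quotient.mk x, ?_⟩
    rw [Submodule.mapQ_apply, hx, Submodule.Quotient.mk_sub,
      (Submodule.Quotient.mk_eq_zero q).mpr hy'q, sub_zero]
  · rintro ⟨x, rfl⟩
    obtain ⟨x, rfl⟩ := Submodule.Quotient.mk_surjective p x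
    rw [Submodule.mapQ_apply, Submodule.mapQ_apply, hfg.apply_apply_eq_zero,
      Submodule.Quotient.mk_zero]

end QuotientMaps

section Comodules

variable {C : Type u} [AddCommGroup C] [Module k C] {Δ : C →ₗ[k] C ⊗[k] C} {ε : C →ₗ[k] k}
  {M : Type u} [AddCommGroup M] [Module k M]

theorem lAct_add (s : ComodStr Δ ε M) (f g : C →ₗ[k] k) :
    lAct Δ s (f + g) = lAct Δ s f + lAct Δ s g := by
  simp only [lAct, TensorProduct.map_add_right, LinearMap.comp_add, LinearMap.add_comp]

theorem lAct_smul (s : ComodStr Δ ε M) (a : k) (f : C →ₗ[k] k) :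
    lAct Δ s (a • f) = a • lAct Δ s f := by
  simp only [lAct, TensorProduct.map_smul_right, LinearMap.comp_smul, LinearMap.smul_comp]

noncomputable def evalRight (X : Type*) [AddCommGroup X] [Module k X] (h : C →ₗ[k] k) :
    X ⊗[k] C →ₗ[k] X :=
  (TensorProduct.rid k X).toLinearMap ∘ₗ map LinearMap.id h

@[simp] theorem evalRight_tmul {X : Type*} [AddCommGroup X] [Module k X] (h : C →ₗ[k] k)
    (x : X) (c : C) : evalRight X h (x ⊗ₜ c) = h c • x := rfl

theorem lAct_conv (s : ComodStr Δ ε M) (f g : C →ₗ[k] k) :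
    lAct Δ s (conv Δ f g) = lAct Δ s f ∘ₗ lAct Δ s g := by
  let fg : C ⊗[k] C →ₗ[k] k := (TensorProduct.lid k k).toLinearMap ∘ₗ map f g
  have conv_eq : evalRight M (conv Δ f g) = evalRight M fg ∘ₗ map LinearMap.id Δ :=
    ext' fun m c => by simp [evalRight, conv, fg]
  have eval_twice : evalRight M f ∘ₗ evalRight (M ⊗[k] C) g
      = evalRight M fg ∘ₗ (TensorProduct.assoc k M C C).toLinearMap :=
    ext_threefold fun m c c' => by simp [evalRight, fg, smul_smul, mul_comm]
  have ρ_natural : s.ρ ∘ₗ evalRight M g = evalRight (M ⊗[k] C) g ∘ₗ map s.ρ LinearMap.id :=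
    ext' fun m c => by simp
  ext m
  have coassoc := LinearMap.congr_fun s.coassoc m
  simp only [LinearMap.comp_apply, LinearEquiv.coe_coe] at coassoc
  calc lAct Δ s (conv Δ f g) m
      = evalRight M fg (map LinearMap.id Δ (s.ρ m)) := LinearMap.congr_fun conv_eq (s.ρ m)
    _ = evalRight M f (evalRight (M ⊗[k] C) g (map s.ρ LinearMap.id (s.ρ m))) := by
        rw [← coassoc]
        exact (LinearMap.congr_fun eval_twice _).symm
    _ = lAct Δ s f (lAct Δ s g m) :=
        congrArg _ (LinearMap.congr_fun ρ_natural (s.ρ m)).symm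

noncomputable def ComodStr.toCstarMod (s : ComodStr Δ ε M) : CstarMod Δ ε M where
  act := lAct Δ s
  act_add := lAct_add s
  act_smul := lAct_smul s
  act_one := s.counit
  act_mul := lAct_conv s

theorem apply_rAct (f g : C →ₗ[k] k) (c : C) : g (rAct Δ f c) = conv Δ f g c :=
  LinearMap.congr_fun (ext' fun a b => by simp :
    g ∘ₗ (TensorProduct.lid k C).toLinearMap ∘ₗ map f LinearMap.id
      = (TensorProduct.lid k k).toLinearMap ∘ₗ map f g) (Δ c)

theorem relators_le_ker_lift_iff (s : ComodStr Δ ε M) (β : M →ₗ[k] C →ₗ[k] k) :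
    relators Δ ε s ≤ LinearMap.ker (lift β.flip) ↔
      ∀ f m, β (lAct Δ s f m) = conv Δ f (β m) := by
  rw [relators, Submodule.span_le]
  constructor
  · intro h f m
    ext c
    exact (sub_eq_zero.mp (by simpa [apply_rAct] using h ⟨f, c, m, rfl⟩)).symm
  · rintro h x ⟨f, c, m, rfl⟩
    simp [apply_rAct, h]

variable {N : Type u} [AddCommGroup N] [Module k N] {s : ComodStr Δ ε M} {t : ComodStr Δ ε N}

theorem relators_le_map_of_surjective {ψ : M →ₗ[k] N} (hψ : IsComodHom Δ ε s t ψ)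
    (hsurj : Function.Surjective ψ) :
    relators Δ ε t ≤ (relators Δ ε s).map (map LinearMap.id ψ) := by
  rw [relators, Submodule.span_le]
  rintro x ⟨f, c, n, rfl⟩
  obtain ⟨m, rfl⟩ := hsurj n
  refine ⟨_, Submodule.subset_span ⟨f, c, m, rfl⟩, ?_⟩
  simp [equivariant_of_isComodHom Δ ε hψ]

theorem comap_relators_le_of_selfInjective (hC : CstarLeftSelfInjective Δ ε) {φ : M →ₗ[k] N}
    (hφ : IsComodHom Δ ε s t φ) (hinj : Function.Injective φ) :
    (relators Δ ε t).comap (map LinearMap.id φ) ≤ relators Δ ε s := by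
  intro z hz
  by_contra hzs
  obtain ⟨γ, hγz, hγs⟩ := Submodule.exists_dual_map_eq_bot_of_notMem hzs inferInstance
  rw [← LinearMap.le_ker_iff_map] at hγs
  have hγ : lift (curry γ).flip.flip = γ := ext' fun _ _ => rfl
  obtain ⟨β, hβ, hβφ⟩ := hC M N s.toCstarMod t.toCstarMod φ (equivariant_of_isComodHom Δ ε hφ)
    hinj _ ((relators_le_ker_lift_iff s _).mp (hγ ▸ hγs))
  have hγβ : lift β.flip ∘ₗ map LinearMap.id φ = γ :=
    ext' fun c m => LinearMap.congr_fun (LinearMap.congr_fun hβφ m) c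
  exact hγz (hγβ ▸ (relators_le_ker_lift_iff t β).mpr hβ hz)

end Comodules

/-- Lemma `Nakayama-dual-self-injective`:  if the convolution algebra
`C*` is left self-injective then the Nakayama functor `N_C` is exact. -/
theorem nakayama_exact_of_self_injective
    (C : Type u) [AddCommGroup C] [Module k C] [Coalgebra k C]
    (h : CstarLeftSelfInjective (Coalgebra.comul (R := k) (A := C)) Coalgebra.counit) :
    NakayamaExact (Coalgebra.comul (R := k) (A := C)) Coalgebra.counit := by
  intro M₁ M₂ M₃ _ _ _ _ _ _ s₁ s₂ s₃ φ ψ hφ hψ hφinj hψsurj hexact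
  exact ⟨Submodule.mapQ_injective_of_comap_le _ (comap_relators_le_of_selfInjective h hφ hφinj),
    Submodule.mapQ_surjective_of_surjective _ (LinearMap.lTensor_surjective C hψsurj),
    Submodule.exact_mapQ (lTensor_exact C hexact hψsurj) _ _
      (relators_le_map_of_surjective hψ hψsurj)⟩

end Stmt2
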